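/- arXiv:2212.14353 — 2 statements merged into one kernel-verified Lean document; each statement's English description precedes it below -/
import Mathlib

section
/- If ε ≥ ε*, the consistency radius of an assignment s on a sheaf S over an abstract simplicial complex X, then s (with each non-vertex face assigned the mean of its restricted vertex values) is a pseudosection of the ε-approximate consistency structure; in particular a pseudosection exists for every ε ≥ ε*. -/
/-!
Replacing one value `z` of a multiset `Z` by its mean `μ` cannot increase the spread: the mean
of the new multiset minimizes its sum of squared deviations, so that sum is at most the sum of
squared deviations from `μ`, which is that of `Z` minus `(z - μ)²`, and the cardinality is
unchanged. On a face the replaced values are exactly of this form, and the spread of the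
restricted values is bounded by the consistency radius.
-/

/-- The mean of a finite multiset of real numbers. -/
noncomputable def mmean (Y : Multiset ℝ) : ℝ := Y.sum / Y.card

/-- The spread `δ(Y)`: square root of the population variance of `Y`. -/
noncomputable def spread (Y : Multiset ℝ) : ℝ :=
  Real.sqrt ((Y.map (fun y => (y - mmean Y) ^ 2)).sum / Y.card)

/-- A sheaf on an abstract simplicial complex with all stalks equal to `ℝ`:
restriction maps along face inclusions, satisfying the composition law. -/
structure RealSheaf (V : Type*) where
  res : Finset V → Finset V → ℝ → ℝ
  res_id : ∀ γ, res γ γ = id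
  res_comp : ∀ γ δ θ : Finset V, γ ⊆ δ → δ ⊆ θ → (res δ θ) ∘ (res γ δ) = res γ θ

variable {V : Type*} [DecidableEq V]

/-- The multiset of restricted vertex values of the assignment `s` on the face `β`. -/
noncomputable def restrictedVals (S : RealSheaf V) (s : V → ℝ) (β : Finset V) :
    Multiset ℝ :=
  β.val.map (fun v => S.res {v} β (s v))

/-- The multiset of restricted vertex values on `β` with the value at vertex `v`
replaced by `s(β)`, where `s(β)` is taken to be the mean of the restricted values. -/
noncomputable def replacedVals (S : RealSheaf V) (s : V → ℝ) (β : Finset V) (v : V) :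
    Multiset ℝ :=
  mmean (restrictedVals S s β) ::ₘ (β.erase v).val.map (fun w => S.res {w} β (s w))

/-- `s` is a pseudosection of the `ε`-approximate consistency structure:
on each non-vertex face, (i) the spread of the restricted vertex values is at most `ε`,
and (ii) replacing any one restricted value by the face value (the mean) still gives
spread at most `ε`. -/
noncomputable def IsEpsPseudosection (S : RealSheaf V) (X : Finset (Finset V))
    (s : V → ℝ) (ε : ℝ) : Prop :=
  ∀ β ∈ X, 2 ≤ β.card →
    spread (restrictedVals S s β) ≤ ε ∧
    ∀ v ∈ β, spread (replacedVals S s β v) ≤ ε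

lemma sum_map_sub_sq (W : Multiset ℝ) (c : ℝ) :
    (W.map (fun y => (y - c) ^ 2)).sum
      = (W.map (fun y => y ^ 2)).sum - 2 * c * W.sum + (W.card : ℝ) * c ^ 2 := by
  induction W using Multiset.induction with
  | empty => simp
  | cons a t ih =>
    simp only [Multiset.map_cons, Multiset.sum_cons, Multiset.card_cons, ih]
    push_cast
    ring

lemma sum_map_sub_mmean_sq_le (W : Multiset ℝ) (c : ℝ) :
    (W.map (fun y => (y - mmean W) ^ 2)).sum ≤ (W.map (fun y => (y - c) ^ 2)).sum := by
  rcases eq_or_ne W 0 with rfl | hW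
  · simp
  have hcard : (0 : ℝ) < W.card := mod_cast Multiset.card_pos.mpr hW
  have hsum : W.sum = W.card * mmean W := by
    rw [mmean]
    field_simp
  rw [sum_map_sub_sq, sum_map_sub_sq, hsum]
  nlinarith [mul_nonneg hcard.le (sq_nonneg (c - mmean W))]

lemma spread_cons_mmean_le (z : ℝ) (T : Multiset ℝ) :
    spread (mmean (z ::ₘ T) ::ₘ T) ≤ spread (z ::ₘ T) := by
  set μ := mmean (z ::ₘ T)
  unfold spread
  rw [Multiset.card_cons, Multiset.card_cons]
  gcongr
  calc ((μ ::ₘ T).map (fun y => (y - mmean (μ ::ₘ T)) ^ 2)).sum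
      ≤ ((μ ::ₘ T).map (fun y => (y - μ) ^ 2)).sum := sum_map_sub_mmean_sq_le _ _
    _ = (T.map (fun y => (y - μ) ^ 2)).sum := by simp
    _ ≤ (z - μ) ^ 2 + (T.map (fun y => (y - μ) ^ 2)).sum := by linarith [sq_nonneg (z - μ)]
    _ = ((z ::ₘ T).map (fun y => (y - μ) ^ 2)).sum := by simp

lemma restrictedVals_eq_cons (S : RealSheaf V) (s : V → ℝ) {β : Finset V} {v : V}
    (hv : v ∈ β) :
    restrictedVals S s β
      = S.res {v} β (s v) ::ₘ (β.erase v).val.map (fun w => S.res {w} β (s w)) := by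
  rw [restrictedVals, Finset.erase_val, ← Multiset.map_cons (fun w => S.res {w} β (s w)),
    Multiset.cons_erase hv]

/-- If `ε` is at least the consistency radius `ε*`, then the assignment (with each
non-vertex face assigned the mean of its restricted vertex values) is a pseudosection
of the `ε`-approximate consistency structure. -/
theorem isEpsPseudosection_of_consistencyRadius_le (S : RealSheaf V)
    (X : Finset (Finset V)) (s : V → ℝ)
    (hne : (X.filter fun β => 2 ≤ β.card).Nonempty) (ε : ℝ)
    (hε : ((X.filter fun β => 2 ≤ β.card).sup' hne
        fun β => spread (restrictedVals S s β)) ≤ ε) :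
    IsEpsPseudosection S X s ε := by
  intro β hβ hcard
  have hspread : spread (restrictedVals S s β) ≤ ε :=
    (Finset.le_sup' (fun β => spread (restrictedVals S s β))
      (Finset.mem_filter.mpr ⟨hβ, hcard⟩)).trans hε
  refine ⟨hspread, fun v hv => ?_⟩
  have hreplaced := spread_cons_mmean_le (S.res {v} β (s v))
    ((β.erase v).val.map fun w => S.res {w} β (s w))
  rw [← restrictedVals_eq_cons S s hv] at hreplaced
  exact hreplaced.trans hspread
end

section
/- If Z is a multiset of reals with |Z| ≥ 2 and z* ∈ Z attains max |z − μ_Z|, then the variance of Z \ {z*} is at most the variance of Z, i.e., δ(Z \ {z*}) ≤ δ(Z). -/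
lemma mmean_sum (Y : Multiset ℝ) : Y.sum = (Multiset.card Y : ℝ) * mmean Y := by
  rcases Nat.eq_zero_or_pos (Multiset.card Y) with h | h
  · rw [Multiset.card_eq_zero] at h
    simp [h, mmean]
  · have : (Multiset.card Y : ℝ) ≠ 0 := by positivity
    unfold mmean
    field_simp

lemma sum_map_mul_left' (b : ℝ) (Y : Multiset ℝ) :
    ((Y.map fun y => b * y)).sum = b * Y.sum := by
  induction Y using Multiset.induction with
  | empty => simp
  | cons a s ih => simp [ih]; ring

lemma sq_dev_decomp (Y : Multiset ℝ) (c : ℝ) :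
    ((Y.map fun y => (y - c) ^ 2)).sum =
      ((Y.map fun y => (y - mmean Y) ^ 2)).sum
        + (Multiset.card Y : ℝ) * (mmean Y - c) ^ 2 := by
  set μ := mmean Y with hμ
  have h1 : (Y.map fun y => (y - c) ^ 2)
      = Y.map fun y => (y - μ) ^ 2 + (2 * (μ - c) * y + (c ^ 2 - μ ^ 2)) := by
    apply Multiset.map_congr rfl
    intro y _
    ring
  rw [h1, Multiset.sum_map_add, Multiset.sum_map_add]
  have h2 : ((Y.map fun y => 2 * (μ - c) * y)).sum = 2 * (μ - c) * Y.sum :=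
    sum_map_mul_left' _ _
  have h3 : ((Y.map fun _ => c ^ 2 - μ ^ 2)).sum
      = (Multiset.card Y : ℝ) * (c ^ 2 - μ ^ 2) := by
    rw [Multiset.map_const', Multiset.sum_replicate, nsmul_eq_mul]
  rw [h2, h3, mmean_sum Y, ← hμ]
  ring

lemma sum_sq_mean_le (Y : Multiset ℝ) (c : ℝ) :
    ((Y.map fun y => (y - mmean Y) ^ 2)).sum ≤ ((Y.map fun y => (y - c) ^ 2)).sum := by
  rw [sq_dev_decomp Y c]
  have : (0:ℝ) ≤ (Multiset.card Y : ℝ) * (mmean Y - c) ^ 2 := by positivity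
  linarith

/-- Removing an element farthest from the mean from a multiset of at least two reals
does not increase the spread. -/
theorem spread_erase_farthest_le (Z : Multiset ℝ) (hZ : 2 ≤ Multiset.card Z)
    (z : ℝ) (hz : z ∈ Z) (hmax : ∀ w ∈ Z, |w - mmean Z| ≤ |z - mmean Z|) :
    spread (Z.erase z) ≤ spread Z := by
  set μ := mmean Z with hμ
  set E := Z.erase z with hE
  have hn2 : (2:ℝ) ≤ (Multiset.card Z : ℝ) := by exact_mod_cast hZ
  have hcardE : (Multiset.card E : ℝ) = (Multiset.card Z : ℝ) - 1 := by
    rw [hE, Multiset.card_erase_of_mem hz]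
    have h0 : 0 < Multiset.card Z := by omega
    rw [Nat.pred_eq_sub_one, Nat.cast_pred h0]
  have hZdecomp : z ::ₘ E = Z := Multiset.cons_erase hz
  set n : ℝ := (Multiset.card Z : ℝ) with hn
  set S : ℝ := ((Z.map fun w => (w - μ) ^ 2)).sum with hS
  set d2 : ℝ := (z - μ) ^ 2 with hd2
  -- sum over E of (w-μ)^2 is S - d2
  have hSE : ((E.map fun w => (w - μ) ^ 2)).sum = S - d2 := by
    have : S = d2 + ((E.map fun w => (w - μ) ^ 2)).sum := by
      rw [hS, ← hZdecomp, Multiset.map_cons, Multiset.sum_cons]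
    linarith
  -- S ≤ n * d2
  have hSle : S ≤ n * d2 := by
    have h := Multiset.sum_le_card_nsmul (Z.map fun w => (w - μ) ^ 2) d2 (by
      intro x hx
      obtain ⟨w, hw, rfl⟩ := Multiset.mem_map.mp hx
      calc (w - μ) ^ 2 = |w - μ| ^ 2 := (sq_abs _).symm
        _ ≤ |z - μ| ^ 2 := by
            exact pow_le_pow_left₀ (abs_nonneg _) (hmax w hw) 2
        _ = d2 := sq_abs _)
    rw [Multiset.card_map] at h
    calc S ≤ (Multiset.card Z) • d2 := h
      _ = n * d2 := by rw [nsmul_eq_mul]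
  set E' : ℝ := ((E.map fun w => (w - mmean E) ^ 2)).sum with hE'
  have hE'le : E' ≤ S - d2 := by
    rw [← hSE]
    exact sum_sq_mean_le E μ
  have hE'nonneg : (0:ℝ) ≤ E' := by
    rw [hE']
    apply Multiset.sum_nonneg
    intro x hx
    obtain ⟨w, _, rfl⟩ := Multiset.mem_map.mp hx
    positivity
  have hSnonneg : (0:ℝ) ≤ S := by
    rw [hS]
    apply Multiset.sum_nonneg
    intro x hx
    obtain ⟨w, _, rfl⟩ := Multiset.mem_map.mp hx
    positivity
  have hd2nonneg : (0:ℝ) ≤ d2 := sq_nonneg _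
  -- main inequality on variances
  have hvar : E' / (Multiset.card E : ℝ) ≤ S / n := by
    rw [hcardE]
    rw [div_le_div_iff₀ (by linarith) (by linarith)]
    nlinarith
  unfold spread
  apply Real.sqrt_le_sqrt
  exact hvar
end
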